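/- arXiv:2010.14156 — 2 statements merged into one kernel-verified Lean document; each statement's English description precedes it below -/
import Mathlib

section
/- With G as above, along the surface y = η(x): G_x + η′ G_y = −½(ψ_x² + ψ_y²) − η + r. Consequently, x ↦ G(x,η(x)) is constant if and only if the Bernoulli condition ½|∇ψ|² + η = r holds on y = η. -/
open Real Set

noncomputable section

/-- Partial derivative in `x`. -/
def px (f : ℝ × ℝ → ℝ) (z : ℝ × ℝ) : ℝ := fderiv ℝ f z (1, 0)

/-- Partial derivative in `y`. -/
def py (f : ℝ × ℝ → ℝ) (z : ℝ × ℝ) : ℝ := fderiv ℝ f z (0, 1)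

/-! The derivative of `G` along the surface is `G_x + η' G_y` by the chain rule; on the surface
`ψ = 1` kills the vorticity terms and the kinematic condition `ψ_x = -η' ψ_y` turns
`G_x + η' ψ_x ψ_y` into `-½ |∇ψ|² - η + r`. -/

theorem hasDerivAt_comp_graph {G : ℝ × ℝ → ℝ} {η : ℝ → ℝ} {x : ℝ}
    (hG : DifferentiableAt ℝ G (x, η x)) (hη : DifferentiableAt ℝ η x) :
    HasDerivAt (fun x => G (x, η x)) (px G (x, η x) + deriv η x * py G (x, η x)) x := by
  have hgraph : HasDerivAt (fun x => (x, η x)) ((1 : ℝ), deriv η x) x :=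
    (hasDerivAt_id x).prodMk hη.hasDerivAt
  refine (hG.hasFDerivAt.comp_hasDerivAt x hgraph).congr_deriv ?_
  have hdir : ((1 : ℝ), deriv η x) = (1, 0) + deriv η x • ((0 : ℝ), (1 : ℝ)) := by simp
  rw [hdir, map_add, map_smul, smul_eq_mul, px, py]

theorem exists_const_iff_forall_eq_zero_of_hasDerivAt {f f' : ℝ → ℝ}
    (hf : ∀ x, HasDerivAt f (f' x) x) : (∃ c, ∀ x, f x = c) ↔ ∀ x, f' x = 0 := by
  constructor
  · rintro ⟨c, hc⟩ x
    rw [← (hf x).deriv, funext hc, deriv_const]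
  · intro hzero
    refine ⟨f 0, fun x => is_const_of_deriv_eq_zero (fun x => (hf x).differentiableAt)
      (fun x => ?_) x 0⟩
    rw [(hf x).deriv, hzero]

theorem G_constant_iff_bernoulli
    (ψ G : ℝ × ℝ → ℝ) (Ω η : ℝ → ℝ) (r : ℝ)
    (hG : Differentiable ℝ G)
    (hη : Differentiable ℝ η)
    (hsurf : ∀ x, ψ (x, η x) = 1)
    (hkin : ∀ x, px ψ (x, η x) + deriv η x * py ψ (x, η x) = 0)
    (hGx : ∀ z : ℝ × ℝ,
      px G z = ((px ψ z) ^ 2 - (py ψ z) ^ 2) / 2 - Ω (ψ z) + Ω 1 + r - η z.1)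
    (hGy : ∀ z : ℝ × ℝ, py G z = px ψ z * py ψ z) :
    (∀ x, px G (x, η x) + deriv η x * py G (x, η x)
        = -(((px ψ (x, η x)) ^ 2 + (py ψ (x, η x)) ^ 2) / 2) - η x + r) ∧
    ((∃ c, ∀ x, G (x, η x) = c) ↔
      ∀ x, ((px ψ (x, η x)) ^ 2 + (py ψ (x, η x)) ^ 2) / 2 + η x = r) := by
  have hsurface : ∀ x, px G (x, η x) + deriv η x * py G (x, η x)
      = -(((px ψ (x, η x)) ^ 2 + (py ψ (x, η x)) ^ 2) / 2) - η x + r := by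
    intro x
    rw [hGx, hGy, hsurf]
    linear_combination px ψ (x, η x) * hkin x
  refine ⟨hsurface, ?_⟩
  rw [exists_const_iff_forall_eq_zero_of_hasDerivAt fun x => hasDerivAt_comp_graph (hG _) (hη x)]
  refine forall_congr' fun x => ?_
  rw [hsurface]
  constructor <;> intro h <;> linarith
end
end

section
/- Let ψ be a C² stream function of a Stokes wave with ω ≥ 0, Bernoulli constant r, and surface value ψ_y(x,η(x)) =: u(x). Suppose there is k > 0 such that u′(x) + kη′(x) ≤ 0 whenever η′(x) ≥ 0. If x_t < x_c are positions of a trough and the adjacent crest (η′ ≥ 0 on [x_t,x_c]), then for every x ∈ [x_t,x_c]: u(x) ≥ k(η(x_c) − η(x)) + √(2(r − η(x_c))). In particular, if r − η(x_c) ≤ 1/2, then for every x ∈ [x_t,x_c]: u(x) ≥ min(k,1)·max(η(x_c) − η(x), √(2(r − η(x_c)))) ≥ (min(k,1)/2)·(r − η(x)). -/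
open Real Set

noncomputable section

/-- Integration step for the lower bound on the surface velocity
`u(x) = ψ_y(x,η(x))` between a trough `x_t` and the adjacent crest `x_c`. -/
theorem surface_velocity_lower_bound
    (u η : ℝ → ℝ) (r k : ℝ) (hk : 0 < k)
    (hu : Differentiable ℝ u) (hη : Differentiable ℝ η)
    (hineq : ∀ x, 0 ≤ deriv η x → deriv u x + k * deriv η x ≤ 0)
    (x_t x_c : ℝ) (hlt : x_t < x_c)
    (hmono : ∀ x ∈ Set.Icc x_t x_c, 0 ≤ deriv η x)
    (hcrest : u x_c = Real.sqrt (2 * (r - η x_c)))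
    (hrc : η x_c ≤ r) :
    (∀ x ∈ Set.Icc x_t x_c,
        k * (η x_c - η x) + Real.sqrt (2 * (r - η x_c)) ≤ u x) ∧
    (r - η x_c ≤ 1 / 2 →
      ∀ x ∈ Set.Icc x_t x_c, min k 1 / 2 * (r - η x) ≤ u x) := by
  have hg : Differentiable ℝ (fun x => u x + k * η x) := hu.add (hη.const_mul k)
  have hanti : AntitoneOn (fun x => u x + k * η x) (Set.Icc x_t x_c) := by
    apply antitoneOn_of_deriv_nonpos (convex_Icc _ _) hg.continuous.continuousOn
      (hg.differentiableOn.mono interior_subset)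
    intro x hx
    rw [interior_Icc] at hx
    have hx' : x ∈ Set.Icc x_t x_c := Ioo_subset_Icc_self hx
    have hd : deriv (fun x => u x + k * η x) x = deriv u x + k * deriv η x := by
      rw [deriv_fun_add (hu x) ((hη x).const_mul k), deriv_const_mul k (hη x)]
    rw [hd]
    exact hineq x (hmono x hx')
  have hηmono : MonotoneOn η (Set.Icc x_t x_c) := by
    apply monotoneOn_of_deriv_nonneg (convex_Icc _ _) hη.continuous.continuousOn
      (hη.differentiableOn.mono interior_subset)
    intro x hx
    rw [interior_Icc] at hx
    exact hmono x (Ioo_subset_Icc_self hx)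
  have key : ∀ x ∈ Set.Icc x_t x_c,
      k * (η x_c - η x) + Real.sqrt (2 * (r - η x_c)) ≤ u x := by
    intro x hx
    have hxc : x_c ∈ Set.Icc x_t x_c := ⟨hlt.le, le_refl _⟩
    have h2 := hanti hx hxc hx.2
    simp only at h2
    rw [hcrest] at h2
    linarith
  refine ⟨key, fun hr12 x hx => ?_⟩
  have hηle : η x ≤ η x_c := hηmono hx ⟨hlt.le, le_refl _⟩ hx.2
  set a := r - η x_c with ha
  set b := η x_c - η x with hb
  have ha0 : 0 ≤ a := sub_nonneg.2 hrc
  have hb0 : 0 ≤ b := sub_nonneg.2 hηle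
  have hsq : Real.sqrt (2 * a) ^ 2 = 2 * a := Real.sq_sqrt (by linarith)
  have hs0 : 0 ≤ Real.sqrt (2 * a) := Real.sqrt_nonneg _
  have hsa : a ≤ Real.sqrt (2 * a) := by nlinarith
  have hmin : min k 1 ≤ k := min_le_left _ _
  have hmin1 : min k 1 ≤ 1 := min_le_right _ _
  have hmin0 : 0 < min k 1 := lt_min hk one_pos
  have hkey := key x hx
  have : min k 1 / 2 * (a + b) ≤ k * b + Real.sqrt (2 * a) := by nlinarith
  have hab : a + b = r - η x := by rw [ha, hb]; ring
  rw [hab] at this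
  linarith
end
end
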